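/- Suppose ψ : U ⊗ V → W is the SL₃-equivariant projection with U = V(e,0) = Sym^e(ℂ³), V = V(0,f) = Sym^f((ℂ³)^∨), e ≤ f, and W a direct sum of Cartan pieces V(e−i₁, f−i₁) ⊕ … ⊕ V(e−i_m, f−i_m). Then there exists a homogeneous polynomial χ ∈ ℚ[x,y] of degree e such that for all u, q ∈ ℂ³ and v, p ∈ (ℂ³)^∨: ψ(u^e ⊗ v^f)(p,q) = v(q)^{f−e}·χ(δ(p,q)·v(u), u(p)·v(q)), where δ(p,q) = Σᵢ p(eᵢ)xᵢ(q). -/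

import Mathlib

/-! On `u^a v^b` the contraction `Δ` acts as multiplication by `a b ⟨u, v⟩` while lowering
both exponents, so `δʲΔʲ(u^e v^f) = (e)ⱼ (f)ⱼ (⟨u, v⟩ δ)ʲ u^(e-j) v^(f-j)` with falling
factorials `(n)ⱼ`. Evaluated at `(p, q)`, each term is `v(q)^(f-e)` times a monomial of degree
`e` in `δ(p,q) v(u)` and `u(p) v(q)`; `e ≤ f` is what lets `v(q)^(f-e)` be pulled out. -/

open MvPolynomial
/-- The contraction operator Δ = Σᵢ ∂/∂eᵢ ⊗ ∂/∂xᵢ on bihomogeneous polynomials,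
where the `Sum.inl` variables are the eᵢ's and the `Sum.inr` variables are the xᵢ's. -/
noncomputable def Delta (P : MvPolynomial (Fin 3 ⊕ Fin 3) ℂ) : MvPolynomial (Fin 3 ⊕ Fin 3) ℂ :=
  ∑ i : Fin 3, pderiv (Sum.inl i) (pderiv (Sum.inr i) P)

/-- The linear form corresponding to u ∈ ℂ³, in the first set of variables. -/
noncomputable def linU (u : Fin 3 → ℂ) : MvPolynomial (Fin 3 ⊕ Fin 3) ℂ :=
  ∑ i : Fin 3, C (u i) * X (Sum.inl i)

/-- The linear form corresponding to v ∈ (ℂ³)^∨, in the second set of variables. -/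
noncomputable def linV (v : Fin 3 → ℂ) : MvPolynomial (Fin 3 ⊕ Fin 3) ℂ :=
  ∑ i : Fin 3, C (v i) * X (Sum.inr i)


/-- The element Σᵢ eᵢ ⊗ xᵢ; multiplication by it is the raising operator δ. -/
noncomputable def deltaElem : MvPolynomial (Fin 3 ⊕ Fin 3) ℂ :=
  ∑ i : Fin 3, X (Sum.inl i) * X (Sum.inr i)

@[simp] lemma pderiv_inl_linU (u : Fin 3 → ℂ) (i : Fin 3) :
    pderiv (Sum.inl i) (linU u) = C (u i) := by
  simp [linU, Pi.single_apply]

@[simp] lemma pderiv_inr_linU (u : Fin 3 → ℂ) (i : Fin 3) :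
    pderiv (Sum.inr i) (linU u) = 0 := by
  simp [linU]

@[simp] lemma pderiv_inr_linV (v : Fin 3 → ℂ) (i : Fin 3) :
    pderiv (Sum.inr i) (linV v) = C (v i) := by
  simp [linV, Pi.single_apply]

@[simp] lemma pderiv_inl_linV (v : Fin 3 → ℂ) (i : Fin 3) :
    pderiv (Sum.inl i) (linV v) = 0 := by
  simp [linV]

lemma Delta_C_mul (a : ℂ) (P : MvPolynomial (Fin 3 ⊕ Fin 3) ℂ) :
    Delta (C a * P) = C a * Delta P := by
  simp [Delta, Finset.mul_sum]

lemma Delta_linU_pow_mul_linV_pow (u v : Fin 3 → ℂ) (a b : ℕ) :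
    Delta (linU u ^ a * linV v ^ b) =
      C ((a * b : ℂ) * ∑ i, u i * v i) * (linU u ^ (a - 1) * linV v ^ (b - 1)) := by
  simp only [Delta, pderiv_mul, pderiv_pow, pderiv_inl_linU, pderiv_inr_linU, pderiv_inl_linV,
    pderiv_inr_linV, pderiv_C, Derivation.map_natCast, mul_zero, zero_mul, add_zero, zero_add,
    C_mul, map_natCast, map_sum, Finset.mul_sum, Finset.sum_mul]
  refine Finset.sum_congr rfl fun i _ => ?_
  ring

lemma Delta_iterate_linU_pow_mul_linV_pow (u v : Fin 3 → ℂ) (a b j : ℕ) :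
    Delta^[j] (linU u ^ a * linV v ^ b) =
      C ((a.descFactorial j * b.descFactorial j : ℂ) * (∑ i, u i * v i) ^ j) *
        (linU u ^ (a - j) * linV v ^ (b - j)) := by
  induction j with
  | zero => simp
  | succ j ih =>
    rw [Function.iterate_succ_apply', ih, Delta_C_mul, Delta_linU_pow_mul_linV_pow, ← mul_assoc,
      ← C_mul, Nat.sub_sub, Nat.sub_sub, Nat.descFactorial_succ, Nat.descFactorial_succ]
    push_cast
    congr 2
    ring

lemma eval_linU (p q u : Fin 3 → ℂ) : eval (Sum.elim p q) (linU u) = ∑ i, u i * p i := by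
  simp [linU]

lemma eval_linV (p q v : Fin 3 → ℂ) : eval (Sum.elim p q) (linV v) = ∑ i, v i * q i := by
  simp [linV]

lemma eval_deltaElem (p q : Fin 3 → ℂ) : eval (Sum.elim p q) deltaElem = ∑ i, p i * q i := by
  simp [deltaElem]

lemma eval_deltaElem_pow_mul_Delta_iterate (u v p q : Fin 3 → ℂ) (a b j : ℕ) :
    eval (Sum.elim p q) (deltaElem ^ j * Delta^[j] (linU u ^ a * linV v ^ b)) =
      (a.descFactorial j * b.descFactorial j : ℂ) * ((∑ i, p i * q i) * ∑ i, v i * u i) ^ j *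
        (∑ i, u i * p i) ^ (a - j) * (∑ i, v i * q i) ^ (b - j) := by
  simp only [Delta_iterate_linU_pow_mul_linV_pow, eval_mul, eval_pow, eval_C, eval_deltaElem,
    eval_linU, eval_linV]
  simp only [mul_comm (v _) (u _)]
  ring

noncomputable def chi (e f : ℕ) (c : ℕ → ℚ) : MvPolynomial (Fin 2) ℚ :=
  ∑ j ∈ Finset.range (e + 1),
    C (c j * e.descFactorial j * f.descFactorial j) * (X 0 ^ j * X 1 ^ (e - j))

lemma isHomogeneous_chi (e f : ℕ) (c : ℕ → ℚ) : (chi e f c).IsHomogeneous e := by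
  refine IsHomogeneous.sum _ _ _ fun j hj => ?_
  have hje : 0 + (1 * j + 1 * (e - j)) = e := by
    have := Finset.mem_range_succ_iff.mp hj
    omega
  simpa only [hje] using (isHomogeneous_C _ _).mul
    (((isHomogeneous_X ℚ (0 : Fin 2)).pow j).mul ((isHomogeneous_X ℚ (1 : Fin 2)).pow (e - j)))

lemma aeval_chi (e f : ℕ) (c : ℕ → ℚ) (x y : ℂ) :
    aeval ![x, y] (chi e f c) =
      ∑ j ∈ Finset.range (e + 1),
        (c j * e.descFactorial j * f.descFactorial j : ℂ) * x ^ j * y ^ (e - j) := by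
  simp [chi, mul_assoc]

/-- Corollary 2.8: if ψ is a sum of equivariant projections, hence a ℚ-linear combination
Σⱼ cⱼ δʲΔʲ, then there is a homogeneous polynomial χ ∈ ℚ[x,y] of degree e such that
ψ(u^e ⊗ v^f)(p,q) = v(q)^{f−e}·χ(δ(p,q)·v(u), u(p)·v(q)) for all u, v, p, q. -/
theorem stmt19 (e f : ℕ) (hef : e ≤ f) (c : ℕ → ℚ)
    (ψ : MvPolynomial (Fin 3 ⊕ Fin 3) ℂ → MvPolynomial (Fin 3 ⊕ Fin 3) ℂ)
    (hψ : ∀ P, ψ P = ∑ j ∈ Finset.range (e + 1), (c j : ℂ) • (deltaElem ^ j * Delta^[j] P)) :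
    ∃ χ : MvPolynomial (Fin 2) ℚ, χ.IsHomogeneous e ∧
      ∀ (u q : Fin 3 → ℂ) (v p : Fin 3 → ℂ),
        eval (Sum.elim p q) (ψ (linU u ^ e * linV v ^ f)) =
          (∑ i, v i * q i) ^ (f - e) *
            aeval ![(∑ i, p i * q i) * (∑ i, v i * u i),
                    (∑ i, u i * p i) * (∑ i, v i * q i)] χ := by
  refine ⟨chi e f c, isHomogeneous_chi e f c, fun u q v p => ?_⟩
  rw [hψ, aeval_chi, map_sum, Finset.mul_sum]
  refine Finset.sum_congr rfl fun j hj => ?_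
  have hje : j ≤ e := Finset.mem_range_succ_iff.mp hj
  have hpow : (∑ i, v i * q i) ^ (f - j) =
      (∑ i, v i * q i) ^ (f - e) * (∑ i, v i * q i) ^ (e - j) := by
    rw [← pow_add]
    congr 1
    omega
  rw [smul_eq_C_mul, eval_mul, eval_C, eval_deltaElem_pow_mul_Delta_iterate, hpow]
  ring
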